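/- arXiv:2311.02879 — 2 statements merged into one kernel-verified Lean document; each statement's English description precedes it below -/
import Mathlib

section
/- Let N ≥ 2, let d ≥ N, and let x_1, …, x_N ∈ ℝ^d be orthonormal vectors. Consider the multiclass hard-margin SVM problem: minimize ∑_{y=1}^N ‖w_y‖² over tuples (w_1, …, w_N) ∈ (ℝ^d)^N subject to the constraints w_y^⊤ x_y ≥ w_{y'}^⊤ x_y + 1 for all y ∈ {1,…,N} and all y' ≠ y. Then the tuple defined by w_y = x_y − (1/N)∑_{i=1}^N x_i is feasible for these constraints, and it is the unique minimizer: every feasible tuple (w_1', …, w_N') with (w_1', …, w_N') ≠ (w_1, …, w_N) satisfies ∑_{y=1}^N ‖w_y'‖² > ∑_{y=1}^N ‖w_y‖². -/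
open scoped BigOperators

/-- Multiclass hard-margin SVM on an orthonormal dataset: the tuple
`w y = x y - (1/N) ∑ i, x i` is feasible and is the unique minimizer of
`∑ y, ‖w y‖²` over feasible tuples. -/
theorem svm_orthonormal_unique_minimizer
    (N d : ℕ) (hN : 2 ≤ N) (hd : N ≤ d)
    (x : Fin N → EuclideanSpace ℝ (Fin d)) (hx : Orthonormal ℝ x)
    (w : Fin N → EuclideanSpace ℝ (Fin d))
    (hw : ∀ y, w y = x y - (1 / (N : ℝ)) • ∑ i, x i) :
    (∀ y y' : Fin N, y' ≠ y →
        (inner ℝ (w y) (x y) : ℝ) ≥ (inner ℝ (w y') (x y) : ℝ) + 1) ∧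
    (∀ w' : Fin N → EuclideanSpace ℝ (Fin d),
        (∀ y y' : Fin N, y' ≠ y →
          (inner ℝ (w' y) (x y) : ℝ) ≥ (inner ℝ (w' y') (x y) : ℝ) + 1) →
        w' ≠ w →
        ∑ y, ‖w' y‖ ^ 2 > ∑ y, ‖w y‖ ^ 2) := by
  have hNpos : (0:ℝ) < N := by positivity
  have hN0 : (N : ℝ) ≠ 0 := ne_of_gt hNpos
  have hxij : ∀ i j : Fin N, (inner ℝ (x i) (x j) : ℝ) = if i = j then 1 else 0 :=
    orthonormal_iff_ite.mp hx
  have hwx : ∀ i y : Fin N,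
      (inner ℝ (w i) (x y) : ℝ) = (if i = y then 1 else 0) - 1 / N := by
    intro i y
    rw [hw, inner_sub_left, real_inner_smul_left, sum_inner]
    simp [hxij]
  have feas : ∀ y y' : Fin N, y' ≠ y →
      (inner ℝ (w y) (x y) : ℝ) ≥ (inner ℝ (w y') (x y) : ℝ) + 1 := by
    intro y y' hne
    rw [hwx, hwx]
    simp [hne]
  refine ⟨feas, ?_⟩
  intro w' hfeas hne
  set B : Fin N → Fin N → ℝ := fun y i => inner ℝ (w' i) (x y) with hB
  set S1 : ℝ := ∑ y, B y y with hS1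
  set S2 : ℝ := ∑ y, ∑ i, B y i with hS2
  -- each inner product of w y with itself
  have hww : ∀ y : Fin N, (inner ℝ (w y) (w y) : ℝ) = 1 - 1 / N := by
    intro y
    nth_rewrite 2 [hw y]
    rw [inner_sub_right, real_inner_smul_right, inner_sum]
    simp only [hwx]
    rw [Finset.sum_sub_distrib]
    simp [Finset.card_univ]
    field_simp
    simp
  have hww' : ∀ y : Fin N, (inner ℝ (w y) (w' y) : ℝ) = B y y - (1 / N) * ∑ i, B i y := by
    intro y
    rw [hw, inner_sub_left, real_inner_smul_left, sum_inner]
    simp only [hB]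
    rw [real_inner_comm (x y) (w' y)]
    congr 2
    exact Finset.sum_congr rfl fun i _ => real_inner_comm _ _
  -- sum of linear terms
  have e1 : ∑ y, (inner ℝ (w y) (w' y) : ℝ) = S1 - (1 / N) * S2 := by
    rw [Finset.sum_congr rfl fun y _ => hww' y, Finset.sum_sub_distrib, ← Finset.mul_sum]
    rw [Finset.sum_comm]
  have e2 : ∑ y, ∑ i, (B y y - B y i) = (N:ℝ) * S1 - S2 := by
    rw [show (∑ y, ∑ i, (B y y - B y i)) = ∑ y, ((N:ℝ) * B y y - ∑ i, B y i) from
      Finset.sum_congr rfl fun y _ => by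
        rw [Finset.sum_sub_distrib, Finset.sum_const, Finset.card_univ]
        simp [nsmul_eq_mul]]
    rw [Finset.sum_sub_distrib, ← Finset.mul_sum]
  have hSB : (N:ℝ) * ((N:ℝ) - 1) ≤ ∑ y, ∑ i, (B y y - B y i) := by
    have hrow : ∀ y : Fin N, ((N:ℝ) - 1) ≤ ∑ i, (B y y - B y i) := by
      intro y
      have : ∑ i : Fin N, (if i = y then (0:ℝ) else 1) = (N:ℝ) - 1 := by
        rw [Finset.sum_ite, Finset.sum_const, Finset.sum_const]
        simp [Finset.filter_eq', Finset.filter_ne', Finset.card_univ]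
        rw [Nat.cast_sub (by omega : 1 ≤ N)]
        simp
      rw [← this]
      apply Finset.sum_le_sum
      intro i _
      by_cases h : i = y
      · simp [h]
      · simp only [if_neg h]
        have := hfeas y i h
        simp only [hB] at *
        linarith
    calc (N:ℝ) * ((N:ℝ) - 1) = ∑ _y : Fin N, ((N:ℝ) - 1) := by
          rw [Finset.sum_const, Finset.card_univ]; simp [nsmul_eq_mul]
      _ ≤ _ := Finset.sum_le_sum fun y _ => hrow y
  have hS : (N:ℝ) * ((N:ℝ) - 1) ≤ (N:ℝ) * S1 - S2 := by rw [← e2]; exact hSB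
  have eww : ∑ y, (inner ℝ (w y) (w y) : ℝ) = (N:ℝ) - 1 := by
    rw [Finset.sum_congr rfl fun y _ => hww y, Finset.sum_const, Finset.card_univ]
    simp [nsmul_eq_mul]
    field_simp
  have hlin : 0 ≤ ∑ y, ((inner ℝ (w y) (w' y) : ℝ) - inner ℝ (w y) (w y)) := by
    rw [Finset.sum_sub_distrib, e1, eww]
    have heq : S1 - 1 / N * S2 - ((N:ℝ) - 1)
        = ((N:ℝ) * S1 - S2 - (N:ℝ) * ((N:ℝ) - 1)) / N := by field_simp
    rw [heq]
    apply div_nonneg _ hNpos.le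
    linarith
  have key : ∀ y : Fin N, ‖w' y‖ ^ 2
      = ‖w y‖ ^ 2 + 2 * ((inner ℝ (w y) (w' y) : ℝ) - inner ℝ (w y) (w y)) + ‖w' y - w y‖ ^ 2 := by
    intro y
    have h := norm_add_sq_real (w y) (w' y - w y)
    have hc : w y + (w' y - w y) = w' y := by abel
    rw [hc, inner_sub_right] at h
    linarith
  have hpos : 0 < ∑ y, ‖w' y - w y‖ ^ 2 := by
    obtain ⟨y0, hy0⟩ := Function.ne_iff.mp hne
    apply Finset.sum_pos' (fun i _ => by positivity)
    refine ⟨y0, Finset.mem_univ _, ?_⟩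
    have h0 : w' y0 - w y0 ≠ 0 := sub_ne_zero.mpr hy0
    exact pow_pos (norm_pos_iff.mpr h0) 2
  have total : ∑ y, ‖w' y‖ ^ 2
      = ∑ y, ‖w y‖ ^ 2 + 2 * (∑ y, ((inner ℝ (w y) (w' y) : ℝ) - inner ℝ (w y) (w y)))
        + ∑ y, ‖w' y - w y‖ ^ 2 := by
    rw [Finset.sum_congr rfl fun y _ => key y, Finset.sum_add_distrib,
      Finset.sum_add_distrib, ← Finset.mul_sum]
  rw [total]
  linarith
end

section
/- Let N ≥ 2, d ≥ N, σ > 0, and let μ_1, …, μ_N ∈ ℝ^d be orthonormal. Let ν be the measure on ℝ^d × {1,…,N} with density (x, y) ↦ (1/N)·(2πσ²)^{−d/2}·exp(−‖x − μ_y‖²/(2σ²)) with respect to the product of Lebesgue measure on ℝ^d and counting measure on {1,…,N}. Define w_y = μ_y − (1/N)∑_{i=1}^N μ_i for each y (these are the multiclass max-margin weights for the training set {(μ_y, y)}_{y=1}^N), and let h : ℝ^d → {1,…,N} be given by h(x) = the least index y maximizing w_y^⊤ x. Then for every measurable classifier g : ℝ^d → {1,…,N}, ν({(x, y) : g(x)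 ≠ y}) ≥ ν({(x, y) : h(x) ≠ y}); that is, the max-margin classifier built on the class means is Bayes-optimal for this model. -/
open scoped BigOperators ENNReal
open MeasureTheory

/-- For `Y ~ Uniform([N])` and `X | Y = y ~ N(μ_y, σ² I)` with orthonormal means,
the max-margin classifier built on the class means (weights
`w y = μ y - (1/N) ∑ i, μ i`, ties broken by least index) is Bayes-optimal. -/
theorem maxmargin_on_means_is_bayes_optimal
    (d N : ℕ) (hN : 2 ≤ N) (hd : N ≤ d) (σ : ℝ) (hσ : 0 < σ)
    (μ : Fin N → EuclideanSpace ℝ (Fin d)) (hμ : Orthonormal ℝ μ)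
    (ν : Measure (EuclideanSpace ℝ (Fin d) × Fin N))
    (hν : ν = (volume.prod Measure.count).withDensity
      (fun p => ENNReal.ofReal
        ((1 / (N : ℝ)) * (2 * Real.pi * σ ^ 2) ^ (-(d : ℝ) / 2) *
          Real.exp (-‖p.1 - μ p.2‖ ^ 2 / (2 * σ ^ 2)))))
    (w : Fin N → EuclideanSpace ℝ (Fin d))
    (hw : ∀ y, w y = μ y - (1 / (N : ℝ)) • ∑ i, μ i)
    (h : EuclideanSpace ℝ (Fin d) → Fin N)
    (hh : ∀ x, IsLeast
      {y : Fin N | ∀ y', (inner ℝ (w y') x : ℝ) ≤ (inner ℝ (w y) x : ℝ)} (h x)) :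
    ∀ g : EuclideanSpace ℝ (Fin d) → Fin N, Measurable g →
      ν {p | g p.1 ≠ p.2} ≥ ν {p | h p.1 ≠ p.2} := by
  intro g hg
  -- the density
  set f : EuclideanSpace ℝ (Fin d) × Fin N → ℝ≥0∞ := fun p => ENNReal.ofReal
        ((1 / (N : ℝ)) * (2 * Real.pi * σ ^ 2) ^ (-(d : ℝ) / 2) *
          Real.exp (-‖p.1 - μ p.2‖ ^ 2 / (2 * σ ^ 2))) with hf
  have hfmeas : Measurable f := by
    apply Measurable.ennreal_ofReal
    refine measurable_const.mul ?_
    refine Real.measurable_exp.comp ?_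
    refine Measurable.div ?_ measurable_const
    refine Measurable.neg ?_
    exact ((measurable_fst.sub
      ((measurable_of_countable μ).comp measurable_snd)).norm).pow_const 2
  -- measurability of h
  have hP : ∀ y : Fin N, MeasurableSet {x : EuclideanSpace ℝ (Fin d) |
      ∀ y', (inner ℝ (w y') x : ℝ) ≤ (inner ℝ (w y) x : ℝ)} := by
    intro y
    have : {x : EuclideanSpace ℝ (Fin d) |
        ∀ y', (inner ℝ (w y') x : ℝ) ≤ (inner ℝ (w y) x : ℝ)} =
        ⋂ y', {x | (inner ℝ (w y') x : ℝ) ≤ (inner ℝ (w y) x : ℝ)} := by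
      ext x; simp [Set.mem_iInter]
    rw [this]
    refine MeasurableSet.iInter fun y' => measurableSet_le ?_ ?_ <;>
      exact (continuous_const.inner continuous_id).measurable
  have hhm : Measurable h := by
    apply measurable_to_countable'
    intro y
    have : h ⁻¹' {y} = {x | ∀ y', (inner ℝ (w y') x : ℝ) ≤ (inner ℝ (w y) x : ℝ)} ∩
        ⋂ z : Fin N, {x | (∀ y', (inner ℝ (w y') x : ℝ) ≤ (inner ℝ (w z) x : ℝ)) → y ≤ z} := by
      ext x
      simp only [Set.mem_preimage, Set.mem_singleton_iff, Set.mem_inter_iff, Set.mem_iInter,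
        Set.mem_setOf_eq]
      constructor
      · rintro rfl
        exact ⟨(hh x).1, fun z hz => (hh x).2 hz⟩
      · rintro ⟨h1, h2⟩
        exact le_antisymm ((hh x).2 h1) (h2 _ (hh x).1)
    rw [this]
    refine (hP y).inter (MeasurableSet.iInter fun z => ?_)
    have : {x : EuclideanSpace ℝ (Fin d) |
        (∀ y', (inner ℝ (w y') x : ℝ) ≤ (inner ℝ (w z) x : ℝ)) → y ≤ z} =
        {x | ∀ y', (inner ℝ (w y') x : ℝ) ≤ (inner ℝ (w z) x : ℝ)}ᶜ ∪ {_x | y ≤ z} := by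
      ext x; by_cases hyz : y ≤ z <;> simp [hyz]
    rw [this]
    exact (hP z).compl.union (MeasurableSet.const _)
  -- error formula
  have key : ∀ c : EuclideanSpace ℝ (Fin d) → Fin N, Measurable c →
      ν {p | c p.1 ≠ p.2} = ∫⁻ x, ∑ y : Fin N,
        Set.indicator {p : EuclideanSpace ℝ (Fin d) × Fin N | c p.1 ≠ p.2} f (x, y) := by
    intro c hc
    have hs : MeasurableSet {p : EuclideanSpace ℝ (Fin d) × Fin N | c p.1 ≠ p.2} :=
      ((measurableSet_eq_fun (hc.comp measurable_fst) measurable_snd)).compl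
    rw [hν, withDensity_apply _ hs, ← lintegral_indicator hs f,
      MeasureTheory.lintegral_prod _ ((hfmeas.indicator hs).aemeasurable)]
    congr 1
    ext x
    rw [MeasureTheory.lintegral_count, tsum_fintype]
  rw [key g hg, key h hhm]
  refine lintegral_mono fun x => ?_
  -- pointwise comparison
  set ρ : Fin N → ℝ≥0∞ := fun y => f (x, y) with hρ
  have hind : ∀ (c : EuclideanSpace ℝ (Fin d) → Fin N) (y : Fin N),
      Set.indicator {p : EuclideanSpace ℝ (Fin d) × Fin N | c p.1 ≠ p.2} f (x, y) =
        if y = c x then 0 else ρ y := by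
    intro c y
    by_cases hy : y = c x
    · subst hy
      rw [if_pos rfl, Set.indicator_of_notMem (by simp)]
    · rw [if_neg hy, Set.indicator_of_mem
        (show (x, y) ∈ {p : EuclideanSpace ℝ (Fin d) × Fin N | c p.1 ≠ p.2} from
          fun hcy => hy hcy.symm) f]
  simp only [hind]
  -- ρ (h x) ≥ ρ (g x)
  have hinner : (inner ℝ (μ (g x)) x : ℝ) ≤ (inner ℝ (μ (h x)) x : ℝ) := by
    have h1 : (inner ℝ (w (g x)) x : ℝ) ≤ (inner ℝ (w (h x)) x : ℝ) := (hh x).1 (g x)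
    have e : ∀ y, (inner ℝ (w y) x : ℝ) =
        (inner ℝ (μ y) x : ℝ) - (1 / (N : ℝ)) * inner ℝ (∑ i, μ i) x := by
      intro y
      rw [hw y, inner_sub_left, real_inner_smul_left]
    rw [e, e] at h1
    linarith
  have hρle : ρ (g x) ≤ ρ (h x) := by
    simp only [hρ, hf]
    apply ENNReal.ofReal_le_ofReal
    have hc : 0 ≤ (1 / (N : ℝ)) * (2 * Real.pi * σ ^ 2) ^ (-(d : ℝ) / 2) := by
      positivity
    apply mul_le_mul_of_nonneg_left _ hc
    apply Real.exp_le_exp.2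
    apply div_le_div_of_nonneg_right _ (by positivity)
    · apply neg_le_neg
      have e1 : ‖x - μ (g x)‖ ^ 2 = ‖x‖ ^ 2 - 2 * inner ℝ x (μ (g x)) + ‖μ (g x)‖ ^ 2 :=
        norm_sub_sq_real x (μ (g x))
      have e2 : ‖x - μ (h x)‖ ^ 2 = ‖x‖ ^ 2 - 2 * inner ℝ x (μ (h x)) + ‖μ (h x)‖ ^ 2 :=
        norm_sub_sq_real x (μ (h x))
      have n1 : ‖μ (g x)‖ = 1 := hμ.1 (g x)
      have n2 : ‖μ (h x)‖ = 1 := hμ.1 (h x)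
      have hinner' : (inner ℝ x (μ (g x)) : ℝ) ≤ inner ℝ x (μ (h x)) := by
        rw [← real_inner_comm x (μ (g x)), ← real_inner_comm x (μ (h x))]
        exact hinner
      rw [e1, e2, n1, n2]
      linarith
  -- sum comparison
  have hsum : ∀ a : Fin N, (∑ y : Fin N, if y = a then 0 else ρ y) + ρ a = ∑ y : Fin N, ρ y := by
    intro a
    have h1 : (∑ y : Fin N, if y = a then 0 else ρ y)
        = ∑ y ∈ Finset.univ.erase a, ρ y := by
      rw [← Finset.sum_erase_add Finset.univ _ (Finset.mem_univ a), if_pos rfl, add_zero]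
      exact Finset.sum_congr rfl fun y hy => if_neg (Finset.ne_of_mem_erase hy)
    rw [h1, Finset.sum_erase_add Finset.univ ρ (Finset.mem_univ a)]
  have htop : ρ (h x) ≠ ⊤ := ENNReal.ofReal_ne_top
  have hle : (∑ y : Fin N, if y = h x then 0 else ρ y) + ρ (h x) ≤
      (∑ y : Fin N, if y = g x then 0 else ρ y) + ρ (h x) := by
    rw [hsum (h x)]
    calc (∑ y : Fin N, ρ y) = (∑ y : Fin N, if y = g x then 0 else ρ y) + ρ (g x) :=
          (hsum (g x)).symm
      _ ≤ _ := add_le_add_right hρle _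
  exact (ENNReal.add_le_add_iff_right htop).1 hle
end
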